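/- For every 0 < r < 1 and t ≥ 0, t^r = (1/(−Γ(−r))) · ∫₀^∞ (1 − e^{−t s}) / s^{1+r} ds. -/

import Mathlib

/-!
The substitution `x = t s` pulls out the factor `t ^ r`, leaving the integral for `t = 1`.
Integrating by parts against `d(x ^ (-r)) = -r x ^ (-r - 1) dx`, with boundary terms vanishing
because `1 - e^{-x} ≤ min x 1`, turns that integral into `Γ(1 - r) / r = -Γ(-r)`.
-/

open MeasureTheory Real Set Filter Topology

lemma one_sub_exp_neg_nonneg {x : ℝ} (hx : 0 ≤ x) : 0 ≤ 1 - exp (-x) := by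
  linarith [exp_le_one_iff.mpr (neg_nonpos.mpr hx)]

lemma one_sub_exp_neg_le_self (x : ℝ) : 1 - exp (-x) ≤ x := by
  linarith [add_one_le_exp (-x)]

lemma one_sub_exp_neg_le_one (x : ℝ) : 1 - exp (-x) ≤ 1 := by
  linarith [exp_pos (-x)]

section

variable {r : ℝ}

lemma integrableOn_one_sub_exp_neg_div_rpow (hr0 : 0 < r) (hr1 : r < 1) :
    IntegrableOn (fun x : ℝ => (1 - exp (-x)) / x ^ (1 + r)) (Ioi 0) := by
  have hmeas : ∀ s : Set ℝ, AEStronglyMeasurable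
      (fun x : ℝ => (1 - exp (-x)) / x ^ (1 + r)) (volume.restrict s) :=
    fun _ => (by fun_prop : Measurable _).aestronglyMeasurable
  rw [← Ioc_union_Ioi_eq_Ioi zero_le_one, integrableOn_union]
  constructor
  · have hdom : IntegrableOn (fun x : ℝ => x ^ (-r)) (Ioc 0 1) :=
      (intervalIntegrable_iff_integrableOn_Ioc_of_le zero_le_one).mp
        (intervalIntegral.intervalIntegrable_rpow' (by linarith))
    refine hdom.mono' (hmeas _) ?_
    filter_upwards [ae_restrict_mem measurableSet_Ioc] with x hx
    have hx0 : 0 < x := hx.1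
    rw [norm_of_nonneg (by have := one_sub_exp_neg_nonneg hx0.le; positivity)]
    calc (1 - exp (-x)) / x ^ (1 + r) ≤ x / x ^ (1 + r) := by
          gcongr; exact one_sub_exp_neg_le_self x
      _ = x ^ (-r) := by rw [rpow_add hx0, rpow_one, rpow_neg hx0.le]; field_simp
  · have hdom : IntegrableOn (fun x : ℝ => x ^ (-(1 + r))) (Ioi 1) :=
      integrableOn_Ioi_rpow_of_lt (by linarith) one_pos
    refine hdom.mono' (hmeas _) ?_
    filter_upwards [ae_restrict_mem measurableSet_Ioi] with x (hx : 1 < x)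
    have hx0 : 0 < x := one_pos.trans hx
    rw [norm_of_nonneg (by have := one_sub_exp_neg_nonneg hx0.le; positivity),
      rpow_neg hx0.le, ← one_div]
    gcongr
    exact one_sub_exp_neg_le_one x

lemma tendsto_one_sub_exp_neg_mul_rpow_nhdsGT_zero (hr1 : r < 1) :
    Tendsto (fun x : ℝ => (1 - exp (-x)) * x ^ (-r)) (𝓝[>] 0) (𝓝 0) := by
  have hupper : Tendsto (fun x : ℝ => x ^ (1 - r)) (𝓝[>] 0) (𝓝 0) := by
    have := (continuousAt_rpow_const 0 (1 - r) (Or.inr (by linarith))).tendsto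
    rw [zero_rpow (by linarith)] at this
    exact this.mono_left nhdsWithin_le_nhds
  refine tendsto_of_tendsto_of_tendsto_of_le_of_le' tendsto_const_nhds hupper ?_ ?_
  · filter_upwards [self_mem_nhdsWithin] with x (hx : 0 < x)
    have := one_sub_exp_neg_nonneg hx.le
    positivity
  · filter_upwards [self_mem_nhdsWithin] with x (hx : 0 < x)
    calc (1 - exp (-x)) * x ^ (-r) ≤ x * x ^ (-r) := by
          gcongr; exact one_sub_exp_neg_le_self x
      _ = x ^ (1 - r) := by rw [sub_eq_add_neg, rpow_add hx, rpow_one]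

lemma tendsto_one_sub_exp_neg_mul_rpow_atTop (hr0 : 0 < r) :
    Tendsto (fun x : ℝ => (1 - exp (-x)) * x ^ (-r)) atTop (𝓝 0) := by
  simpa using (tendsto_exp_neg_atTop_nhds_zero.const_sub 1).mul (tendsto_rpow_neg_atTop hr0)

theorem integral_one_sub_exp_neg_div_rpow (hr0 : 0 < r) (hr1 : r < 1) :
    ∫ x in Ioi (0 : ℝ), (1 - exp (-x)) / x ^ (1 + r) = -Gamma (-r) := by
  have hderiv_u : ∀ x ∈ Ioi (0 : ℝ), HasDerivAt (fun x => 1 - exp (-x)) (exp (-x)) x :=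
    fun x _ => by simpa using ((hasDerivAt_neg x).exp).const_sub 1
  have hderiv_v : ∀ x ∈ Ioi (0 : ℝ), HasDerivAt (fun x => x ^ (-r)) (-r * x ^ (-r - 1)) x :=
    fun x hx => hasDerivAt_rpow_const (Or.inl (ne_of_gt hx))
  have hpow : ∀ x ∈ Ioi (0 : ℝ), (1 - exp (-x)) * (-r * x ^ (-r - 1)) =
      -r * ((1 - exp (-x)) / x ^ (1 + r)) := fun x (hx : 0 < x) => by
    rw [show -r - 1 = -(1 + r) by ring, rpow_neg hx.le]; ring
  have hGamma : IntegrableOn (fun x : ℝ => exp (-x) * x ^ (-r)) (Ioi 0) := by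
    simpa using GammaIntegral_convergent (show 0 < 1 - r by linarith)
  have hparts := integral_Ioi_mul_deriv_eq_deriv_mul hderiv_u hderiv_v
    (IntegrableOn.congr_fun ((integrableOn_one_sub_exp_neg_div_rpow hr0 hr1).const_mul (-r))
      (fun x hx => (hpow x hx).symm) measurableSet_Ioi)
    hGamma (tendsto_one_sub_exp_neg_mul_rpow_nhdsGT_zero hr1)
    (tendsto_one_sub_exp_neg_mul_rpow_atTop hr0)
  rw [setIntegral_congr_fun measurableSet_Ioi hpow, integral_const_mul,
    ← show Gamma (1 - r) = ∫ x in Ioi (0 : ℝ), exp (-x) * x ^ (-r) by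
      rw [Gamma_eq_integral (by linarith)]; simp,
    show (1 : ℝ) - r = -r + 1 by ring, Gamma_add_one (by linarith)] at hparts
  exact mul_left_cancel₀ (neg_ne_zero.mpr hr0.ne') (by linarith)

end

lemma integral_comp_mul_left_Ioi_div_rpow (f : ℝ → ℝ) (p : ℝ) {t : ℝ} (ht : 0 < t) :
    ∫ s in Ioi (0 : ℝ), f (t * s) / s ^ p = t ^ (p - 1) * ∫ x in Ioi (0 : ℝ), f x / x ^ p :=
  calc ∫ s in Ioi (0 : ℝ), f (t * s) / s ^ p
      = ∫ s in Ioi (0 : ℝ), t ^ p * (f (t * s) / (t * s) ^ p) :=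
        setIntegral_congr_fun measurableSet_Ioi fun s (hs : 0 < s) => by
          rw [mul_rpow ht.le hs.le]; field_simp
    _ = t ^ p * (t⁻¹ * ∫ x in Ioi (0 : ℝ), f x / x ^ p) := by
        rw [integral_const_mul, integral_comp_mul_left_Ioi (fun x => f x / x ^ p) 0 ht, mul_zero,
          smul_eq_mul]
    _ = t ^ (p - 1) * ∫ x in Ioi (0 : ℝ), f x / x ^ p := by rw [rpow_sub_one ht.ne']; ring

lemma Real.Gamma_neg_of_neg_one_lt_of_neg {s : ℝ} (h1 : -1 < s) (h0 : s < 0) : Gamma s < 0 := by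
  have hpos : 0 < s * Gamma s := Gamma_add_one h0.ne ▸ Gamma_pos_of_pos (by linarith)
  exact neg_of_mul_pos_right hpos h0.le

/-- Schoenberg's integral representation:
for 0 < r < 1 and t ≥ 0, t^r = (1/(−Γ(−r))) ∫₀^∞ (1 − e^{−t s}) / s^{1+r} ds. -/
theorem schoenberg_power_integral_representation
    (r t : ℝ) (hr0 : 0 < r) (hr1 : r < 1) (ht : 0 ≤ t) :
    t ^ r =
      (1 / (-Real.Gamma (-r))) *
        ∫ s in Set.Ioi (0 : ℝ), (1 - Real.exp (-t * s)) / s ^ (1 + r) := by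
  rcases ht.eq_or_lt with rfl | htpos
  · simp [zero_rpow hr0.ne']
  have hscale := integral_comp_mul_left_Ioi_div_rpow (fun x => 1 - exp (-x)) (1 + r) htpos
  simp only [add_sub_cancel_left] at hscale
  have hGamma : Gamma (-r) ≠ 0 := (Gamma_neg_of_neg_one_lt_of_neg (by linarith) (by linarith)).ne
  simp only [neg_mul]
  rw [hscale, integral_one_sub_exp_neg_div_rpow hr0 hr1]
  field_simp
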